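/- Let λ₁, λ₂ > 0 with λ₁ ≠ λ₂, set s₃ = 2λ₁λ₂(λ₁+λ₂), a₁(Δ) = e^{−λ₁Δ} + e^{−λ₂Δ}, a₂(Δ) = −e^{−(λ₁+λ₂)Δ}, and S(Δ) = (1+a₁−a₂)(1−a₁−a₂)(1+a₂)/(1−a₂). Let A < B and let f be twice continuously differentiable in a neighborhood of A with f(A) ≠ 0. Then lim_{Δ→0⁺} Δ·( −a₁(Δ) f(A) + (1+a₁(Δ)²) f(A+Δ) + (a₁(Δ)a₂(Δ) − a₁(Δ)) f(A+2Δ) − a₂(Δ) f(A+3Δ) ) / (S(Δ) f(A+Δ)) = −(f''(A) − (λ₁+λ₂) f'(A) + λ₁λ₂ f(A)) / (s₃ f(A)). -/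

import Mathlib

/-!
Write `p = e^{-λ₁Δ}`, `q = e^{-λ₂Δ}`, so that `a₁ = p + q`, `a₂ = -pq` and
`S = (1+p)(1+q)(1-p)(1-q)(1-pq)/(1+pq) ~ s₃ Δ³`. The numerator `N = ∑ₖ cₖ f(A + kΔ)` is a
four-point stencil, and by Taylor's theorem `N/Δ² → m₀ f(A) + m₁ f'(A) + m₂ f''(A)/2`, where
the moments `∑ cₖ / Δ²`, `∑ k cₖ / Δ`, `∑ k² cₖ` of the weights tend to `-λ₁λ₂`, `λ₁+λ₂`, `-2`:
each moment is a polynomial in `p, q` divisible by the right powers of `1 - p` and `1 - q`.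
Hence `Δ N / (S f(A+Δ)) = (N/Δ²) / ((S/Δ³) f(A+Δ)) → -Q_A`.
-/

open Asymptotics Filter Finset Topology

theorem tendsto_of_tendsto_sub_div {g : ℝ → ℝ} {a L : ℝ}
    (h : Tendsto (fun Δ => (a - g Δ) / Δ) (𝓝[≠] 0) (𝓝 L)) : Tendsto g (𝓝[≠] 0) (𝓝 a) := by
  have hsub : Tendsto (fun Δ => (a - g Δ) / Δ * Δ) (𝓝[≠] 0) (𝓝 (L * 0)) :=
    h.mul (tendsto_nhdsWithin_of_tendsto_nhds tendsto_id)
  rw [mul_zero] at hsub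
  have hg : Tendsto (fun Δ => a - (a - g Δ)) (𝓝[≠] 0) (𝓝 (a - 0)) :=
    (hsub.congr' (eventually_nhdsWithin_of_forall fun Δ hΔ => div_mul_cancel₀ _ hΔ)).const_sub a
  simpa only [sub_sub_cancel, sub_zero] using hg

theorem tendsto_one_sub_exp_neg_mul_div (l : ℝ) :
    Tendsto (fun Δ => (1 - Real.exp (-l * Δ)) / Δ) (𝓝[≠] 0) (𝓝 l) := by
  have h : HasDerivAt (fun Δ => Real.exp (-l * Δ)) (-l) 0 := by
    simpa using ((hasDerivAt_id (0 : ℝ)).const_mul (-l)).exp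
  have hslope := (hasDerivAt_iff_tendsto_slope.mp h).neg
  rw [neg_neg] at hslope
  refine hslope.congr fun Δ => ?_
  simp only [slope_fun_def, mul_zero, Real.exp_zero, sub_zero, smul_eq_mul, vsub_eq_sub]
  ring

theorem isLittleO_taylor_two {f f' : ℝ → ℝ} {f'' x₀ : ℝ}
    (hf : ∀ᶠ x in 𝓝 x₀, HasDerivAt f (f' x) x) (hf' : HasDerivAt f' f'' x₀) :
    (fun x => f x - (f x₀ + f' x₀ * (x - x₀) + f'' * (x - x₀) ^ 2 / 2))
      =o[𝓝 x₀] fun x => (x - x₀) ^ 2 := by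
  obtain ⟨ε, hε, hball⟩ := Metric.eventually_nhds_iff_ball.mp hf
  have hs : 𝓝[Metric.ball x₀ ε] x₀ = 𝓝 x₀ :=
    nhdsWithin_eq_nhds.mpr (Metric.ball_mem_nhds x₀ hε)
  have hT (x : ℝ) : HasDerivAt (fun y => f x₀ + f' x₀ * (y - x₀) + f'' * (y - x₀) ^ 2 / 2)
      (f' x₀ + f'' * (x - x₀)) x := by
    have h := ((((hasDerivAt_id x).sub_const x₀).const_mul (f' x₀)).const_add (f x₀)).add
      ((((hasDerivAt_id x).sub_const x₀).pow 2).const_mul (f'' / 2))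
    refine (h.congr_deriv ?_).congr_of_eventuallyEq (.of_forall fun y => ?_)
    · simp only [mul_one, Nat.cast_ofNat, id_eq, Nat.add_one_sub_one, pow_one]; ring
    · simp only [Pi.add_apply, Pi.pow_apply, id]; ring
  have hR' : (fun x => f' x - (f' x₀ + f'' * (x - x₀))) =o[𝓝 x₀] fun x => (x - x₀) ^ 1 := by
    simpa [sub_sub, mul_comm] using hasDerivAt_iff_isLittleO.mp hf'
  have key := (convex_ball x₀ ε).isLittleO_pow_succ_real (Metric.mem_ball_self hε)
    (fun x hx => ((hball x hx).sub (hT x)).hasDerivWithinAt) (hs ▸ hR')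
  rw [hs] at key
  simpa using key

theorem tendsto_stencil_div_sq {ι : Type*} {s : Finset ι} {x : ι → ℝ} {c : ι → ℝ → ℝ}
    {f f' : ℝ → ℝ} {f'' x₀ m₀ m₁ m₂ : ℝ}
    (hf : ∀ᶠ x in 𝓝 x₀, HasDerivAt f (f' x) x) (hf' : HasDerivAt f' f'' x₀)
    (hc : ∀ i ∈ s, c i =O[𝓝[≠] 0] fun _ => (1 : ℝ))
    (h₀ : Tendsto (fun Δ => (∑ i ∈ s, c i Δ) / Δ ^ 2) (𝓝[≠] 0) (𝓝 m₀))
    (h₁ : Tendsto (fun Δ => (∑ i ∈ s, c i Δ * x i) / Δ) (𝓝[≠] 0) (𝓝 m₁))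
    (h₂ : Tendsto (fun Δ => ∑ i ∈ s, c i Δ * x i ^ 2) (𝓝[≠] 0) (𝓝 m₂)) :
    Tendsto (fun Δ => (∑ i ∈ s, c i Δ * f (x₀ + x i * Δ)) / Δ ^ 2) (𝓝[≠] 0)
      (𝓝 (m₀ * f x₀ + m₁ * f' x₀ + m₂ * f'' / 2)) := by
  set R := fun x => f x - (f x₀ + f' x₀ * (x - x₀) + f'' * (x - x₀) ^ 2 / 2)
  have hR : (fun Δ => ∑ i ∈ s, c i Δ * R (x₀ + x i * Δ)) =o[𝓝[≠] 0] fun Δ => Δ ^ 2 := by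
    refine IsLittleO.fun_sum fun i hi => ?_
    have hnode : Tendsto (fun Δ => x₀ + x i * Δ) (𝓝[≠] 0) (𝓝 x₀) :=
      tendsto_nhdsWithin_of_tendsto_nhds
        ((by fun_prop : Continuous fun Δ : ℝ => x₀ + x i * Δ).tendsto' 0 x₀ (by simp))
    have hscale : (fun Δ => (x₀ + x i * Δ - x₀) ^ 2) =O[𝓝[≠] 0] fun Δ => Δ ^ 2 :=
      (isBigO_const_mul_self (x i ^ 2) _ _).congr_left fun Δ => by ring
    exact ((hc i hi).mul_isLittleO
      (((isLittleO_taylor_two hf hf').comp_tendsto hnode).trans_isBigO hscale)).congr_right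
      fun Δ => one_mul _
  have hlim := (((h₀.mul_const (f x₀)).add (h₁.mul_const (f' x₀))).add
    ((h₂.mul_const f'').div_const 2)).add hR.tendsto_div_nhds_zero
  rw [add_zero] at hlim
  refine hlim.congr' (eventually_nhdsWithin_of_forall fun Δ (hΔ : Δ ≠ 0) => ?_)
  simp only [Finset.sum_div, Finset.sum_mul, ← Finset.sum_add_distrib]
  refine Finset.sum_congr rfl fun i _ => ?_
  simp only [R]
  field_simp
  ring

def ar2Weight (a₁ a₂ : ℝ) : Fin 4 → ℝ := ![-a₁, 1 + a₁ ^ 2, a₁ * a₂ - a₁, -a₂]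

noncomputable def ar2Scale (a₁ a₂ : ℝ) : ℝ := (1 + a₁ - a₂) * (1 - a₁ - a₂) * (1 + a₂) / (1 - a₂)

theorem sum_ar2Weight_mul_apply (a₁ a₂ A Δ : ℝ) (f : ℝ → ℝ) :
    ∑ i, ar2Weight a₁ a₂ i * f (A + (i : ℕ) * Δ) =
      -a₁ * f A + (1 + a₁ ^ 2) * f (A + Δ) + (a₁ * a₂ - a₁) * f (A + 2 * Δ)
        - a₂ * f (A + 3 * Δ) := by
  simp [Fin.sum_univ_four, ar2Weight]
  ring

theorem continuous_ar2Weight (i : Fin 4) : Continuous fun a : ℝ × ℝ => ar2Weight a.1 a.2 i := by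
  fin_cases i <;> simp [ar2Weight] <;> fun_prop

theorem sum_ar2Weight_roots (p q : ℝ) :
    ∑ i, ar2Weight (p + q) (-(p * q)) i = (1 - p) * (1 - q) * (1 - p - q) := by
  simp [Fin.sum_univ_four, ar2Weight]
  ring

theorem sum_ar2Weight_roots_mul (p q : ℝ) :
    ∑ i, ar2Weight (p + q) (-(p * q)) i * (i : ℕ) =
      (1 - p + (1 - q)) * (p + q - 1) - (1 - p) * (1 - q) * (2 * p + 2 * q - 3) := by
  simp [Fin.sum_univ_four, ar2Weight]
  ring

theorem sum_ar2Weight_two_neg_one_mul_sq :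
    ∑ i, ar2Weight 2 (-1) i * ((i : ℕ) : ℝ) ^ 2 = -2 := by
  simp [Fin.sum_univ_four, ar2Weight]
  norm_num

theorem ar2Scale_roots (p q : ℝ) :
    ar2Scale (p + q) (-(p * q)) =
      (1 + p) * (1 + q) * ((1 - p) * (1 - q)) * (1 - p + p * (1 - q)) / (1 + p * q) := by
  simp only [ar2Scale]; ring

section RootsNearOne

variable {p q : ℝ → ℝ} {l₁ l₂ : ℝ}
  (hp : Tendsto (fun Δ => (1 - p Δ) / Δ) (𝓝[≠] 0) (𝓝 l₁))
  (hq : Tendsto (fun Δ => (1 - q Δ) / Δ) (𝓝[≠] 0) (𝓝 l₂))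
include hp hq

theorem tendsto_sum_ar2Weight_div_sq :
    Tendsto (fun Δ => (∑ i, ar2Weight (p Δ + q Δ) (-(p Δ * q Δ)) i) / Δ ^ 2) (𝓝[≠] 0)
      (𝓝 (-(l₁ * l₂))) := by
  have h := (hp.mul hq).mul
    (((tendsto_of_tendsto_sub_div hp).const_sub 1).sub (tendsto_of_tendsto_sub_div hq))
  convert h using 1
  · funext Δ; rw [sum_ar2Weight_roots]; ring
  · ring_nf

theorem tendsto_sum_ar2Weight_mul_div :
    Tendsto (fun Δ => (∑ i, ar2Weight (p Δ + q Δ) (-(p Δ * q Δ)) i * (i : ℕ)) / Δ) (𝓝[≠] 0)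
      (𝓝 (l₁ + l₂)) := by
  have hp₁ := tendsto_of_tendsto_sub_div hp
  have hq₁ := tendsto_of_tendsto_sub_div hq
  have h := ((hp.add hq).mul ((hp₁.add hq₁).sub_const 1)).sub
    ((hp.mul (hq₁.const_sub 1)).mul
      (((hp₁.const_mul 2).add (hq₁.const_mul 2)).sub_const 3))
  convert h using 1
  · funext Δ; rw [sum_ar2Weight_roots_mul]; ring
  · ring_nf

theorem tendsto_coeffs_two_neg_one :
    Tendsto (fun Δ => (p Δ + q Δ, -(p Δ * q Δ))) (𝓝[≠] 0) (𝓝 (2, -1)) := by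
  have h := ((tendsto_of_tendsto_sub_div hp).add (tendsto_of_tendsto_sub_div hq)).prodMk_nhds
    ((tendsto_of_tendsto_sub_div hp).mul (tendsto_of_tendsto_sub_div hq)).neg
  norm_num at h
  exact h

theorem isBigO_ar2Weight (i : Fin 4) :
    (fun Δ => ar2Weight (p Δ + q Δ) (-(p Δ * q Δ)) i) =O[𝓝[≠] 0] fun _ => (1 : ℝ) :=
  (((continuous_ar2Weight i).tendsto _).comp (tendsto_coeffs_two_neg_one hp hq)).isBigO_one ℝ

theorem tendsto_sum_ar2Weight_mul_sq :
    Tendsto (fun Δ => ∑ i, ar2Weight (p Δ + q Δ) (-(p Δ * q Δ)) i * ((i : ℕ) : ℝ) ^ 2) (𝓝[≠] 0)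
      (𝓝 (-2)) := by
  rw [← sum_ar2Weight_two_neg_one_mul_sq]
  exact ((continuous_finsetSum _ fun i _ => (continuous_ar2Weight i).mul continuous_const).tendsto
    _).comp (tendsto_coeffs_two_neg_one hp hq)

theorem tendsto_ar2Scale_div_cube :
    Tendsto (fun Δ => ar2Scale (p Δ + q Δ) (-(p Δ * q Δ)) / Δ ^ 3) (𝓝[≠] 0)
      (𝓝 (2 * l₁ * l₂ * (l₁ + l₂))) := by
  have hp₁ := tendsto_of_tendsto_sub_div hp
  have hq₁ := tendsto_of_tendsto_sub_div hq
  have h := ((((hp₁.const_add 1).mul (hq₁.const_add 1)).mul (hp.mul hq)).mul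
    (hp.add (hp₁.mul hq))).div ((hp₁.mul hq₁).const_add 1) (by norm_num)
  convert h using 1
  · funext Δ; rw [ar2Scale_roots, Pi.div_apply]; ring
  · ring_nf

end RootsNearOne

theorem ar2_exp_second_boundary_limit_general (l₁ l₂ : ℝ) (h₁ : 0 < l₁) (h₂ : 0 < l₂)
    (s₃ : ℝ) (hs₃ : s₃ = 2 * l₁ * l₂ * (l₁ + l₂))
    (a₁ a₂ S : ℝ → ℝ)
    (ha₁ : ∀ Δ, a₁ Δ = Real.exp (-l₁ * Δ) + Real.exp (-l₂ * Δ))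
    (ha₂ : ∀ Δ, a₂ Δ = -Real.exp (-(l₁ + l₂) * Δ))
    (hS : ∀ Δ, S Δ = (1 + a₁ Δ - a₂ Δ) * (1 - a₁ Δ - a₂ Δ) * (1 + a₂ Δ) / (1 - a₂ Δ))
    (A : ℝ) (f : ℝ → ℝ)
    (hfA : ContDiffAt ℝ 2 f A) (hA0 : f A ≠ 0) :
    Tendsto (fun Δ =>
        Δ * (-(a₁ Δ) * f A + (1 + (a₁ Δ) ^ 2) * f (A + Δ)
              + (a₁ Δ * a₂ Δ - a₁ Δ) * f (A + 2 * Δ) - a₂ Δ * f (A + 3 * Δ))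
          / (S Δ * f (A + Δ)))
      (nhdsWithin 0 (Set.Ioi 0))
      (nhds (-(deriv (deriv f) A - (l₁ + l₂) * deriv f A + l₁ * l₂ * f A) / (s₃ * f A))) := by
  have hp := tendsto_one_sub_exp_neg_mul_div l₁
  have hq := tendsto_one_sub_exp_neg_mul_div l₂
  have hf : ∀ᶠ x in 𝓝 A, HasDerivAt f (deriv f x) x :=
    (hfA.eventually (by simp)).mono fun x hx => (hx.differentiableAt (by simp)).hasDerivAt
  have hf' : HasDerivAt (deriv f) (deriv (deriv f) A) A :=
    ((hfA.derivWithin (m := 1) (by norm_num)).differentiableAt (by simp)).hasDerivAt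
  have hnum := tendsto_stencil_div_sq (s := univ) (x := fun i : Fin 4 => ((i : ℕ) : ℝ)) hf hf'
    (fun i _ => isBigO_ar2Weight hp hq i) (tendsto_sum_ar2Weight_div_sq hp hq)
    (tendsto_sum_ar2Weight_mul_div hp hq) (tendsto_sum_ar2Weight_mul_sq hp hq)
  have hden := (tendsto_ar2Scale_div_cube hp hq).mul <| tendsto_nhdsWithin_of_tendsto_nhds <|
    hfA.continuousAt.tendsto.comp ((continuous_const_add A).tendsto' 0 A (add_zero A))
  have hexp_mul (Δ : ℝ) : -(Real.exp (-l₁ * Δ) * Real.exp (-l₂ * Δ)) = a₂ Δ := by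
    rw [ha₂, ← Real.exp_add]; ring_nf
  simp only [← ha₁, hexp_mul, sum_ar2Weight_mul_apply] at hnum hden
  have hs₃0 : 2 * l₁ * l₂ * (l₁ + l₂) * f A ≠ 0 := by positivity
  have hval : -(deriv (deriv f) A - (l₁ + l₂) * deriv f A + l₁ * l₂ * f A) =
      -(l₁ * l₂) * f A + (l₁ + l₂) * deriv f A + -2 * deriv (deriv f) A / 2 := by ring
  rw [hs₃, hval]
  refine ((hnum.div hden hs₃0).congr' (eventually_nhdsWithin_of_forall fun Δ hΔ => ?_)).mono_left
    (nhdsGT_le_nhdsNE 0)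
  have hΔ0 : Δ ≠ 0 := hΔ
  rw [Pi.div_apply, Function.comp_apply, show S Δ = ar2Scale (a₁ Δ) (a₂ Δ) from hS Δ]
  field_simp

/-- Limit of the scaled second AR(2) boundary weight of exponential type: as `Δ → 0⁺`,
`Δ(-a₁f(A) + (1+a₁²)f(A+Δ) + (a₁a₂-a₁)f(A+2Δ) - a₂f(A+3Δ))/(S(Δ) f(A+Δ))`
tends to `-Q_A = -(f''(A) - (λ₁+λ₂)f'(A) + λ₁λ₂ f(A))/(s₃ f(A))`. -/
theorem ar2_exp_second_boundary_limit (l₁ l₂ : ℝ) (h₁ : 0 < l₁) (h₂ : 0 < l₂)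
    (hne : l₁ ≠ l₂)
    (s₃ : ℝ) (hs₃ : s₃ = 2 * l₁ * l₂ * (l₁ + l₂))
    (a₁ a₂ S : ℝ → ℝ)
    (ha₁ : ∀ Δ, a₁ Δ = Real.exp (-l₁ * Δ) + Real.exp (-l₂ * Δ))
    (ha₂ : ∀ Δ, a₂ Δ = -Real.exp (-(l₁ + l₂) * Δ))
    (hS : ∀ Δ, S Δ = (1 + a₁ Δ - a₂ Δ) * (1 - a₁ Δ - a₂ Δ) * (1 + a₂ Δ) / (1 - a₂ Δ))
    (A B : ℝ) (hAB : A < B) (f : ℝ → ℝ)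
    (hfA : ContDiffAt ℝ 2 f A) (hA0 : f A ≠ 0) :
    Tendsto (fun Δ =>
        Δ * (-(a₁ Δ) * f A + (1 + (a₁ Δ) ^ 2) * f (A + Δ)
              + (a₁ Δ * a₂ Δ - a₁ Δ) * f (A + 2 * Δ) - a₂ Δ * f (A + 3 * Δ))
          / (S Δ * f (A + Δ)))
      (nhdsWithin 0 (Set.Ioi 0))
      (nhds (-(deriv (deriv f) A - (l₁ + l₂) * deriv f A + l₁ * l₂ * f A) / (s₃ * f A))) :=
  ar2_exp_second_boundary_limit_general l₁ l₂ h₁ h₂ s₃ hs₃ a₁ a₂ S ha₁ ha₂ hS A f hfA hA0
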